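/- arXiv:2307.06805 — 3 statements merged into one kernel-verified Lean document; each statement's English description precedes it below -/
import Mathlib

section
/- Let h be a C¹ solution of ∇h·f = λh − wᵀf_n. If e^{-λt} h(s_t(x)) → 0 as t → ∞ and the integral converges, then h(x) = ∫₀^∞ e^{-λt} wᵀ f_n(s_t(x)) dt, and consequently the principal eigenfunction is φ(x) = wᵀx + ∫₀^∞ e^{-λt} wᵀ f_n(s_t(x)) dt. -/
/-!
Along the trajectory, `g t := h (s t x)` satisfies `g' = λ g - wᵀ f_n (s t x)` by the PDE, so
`d/dt (e^{-λt} g t) = -e^{-λt} wᵀ f_n (s t x)`. Integrating over `(0, ∞)` and using the decay of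
`e^{-λt} g t` gives `g 0 = h x` as the path integral.
-/

open Filter Set MeasureTheory Topology

theorem hasDerivAt_cexp_neg_mul_mul {g : ℝ → ℂ} {g' l : ℂ} {t : ℝ} (hg : HasDerivAt g g' t) :
    HasDerivAt (fun τ : ℝ => Complex.exp (-(l * τ)) * g τ)
      (Complex.exp (-(l * t)) * (g' - l * g t)) t := by
  have hlin : HasDerivAt (fun τ : ℝ => -(l * (τ : ℂ))) (-l) t :=
    ((Complex.ofRealCLM.hasDerivAt (x := t)).const_mul l).neg.congr_deriv (by simp)
  exact (((Complex.hasDerivAt_exp _).comp t hlin).mul hg).congr_deriv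
    (by simp only [Function.comp_apply]; ring)

theorem integral_Ioi_cexp_neg_mul_eq_of_hasDerivAt {g r : ℝ → ℂ} {l : ℂ}
    (hg : ∀ t ∈ Ici (0 : ℝ), HasDerivAt g (l * g t - r t) t)
    (hdecay : Tendsto (fun t : ℝ => Complex.exp (-(l * t)) * g t) atTop (𝓝 0))
    (hint : IntegrableOn (fun t : ℝ => Complex.exp (-(l * t)) * r t) (Ioi 0)) :
    ∫ t in Ioi (0 : ℝ), Complex.exp (-(l * t)) * r t = g 0 := by
  have hderiv : ∀ t ∈ Ici (0 : ℝ), HasDerivAt (fun τ : ℝ => Complex.exp (-(l * τ)) * g τ)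
      (-(Complex.exp (-(l * t)) * r t)) t := fun t ht =>
    (hasDerivAt_cexp_neg_mul_mul (hg t ht)).congr_deriv (by ring)
  have := integral_Ioi_of_hasDerivAt_of_tendsto' hderiv hint.neg hdecay
  rw [integral_neg] at this
  simpa using this

theorem path_integral_eigenfunction_formula_general
    {n : ℕ} (f f_n : EuclideanSpace ℝ (Fin n) → EuclideanSpace ℝ (Fin n))
    (s : ℝ → EuclideanSpace ℝ (Fin n) → EuclideanSpace ℝ (Fin n))
    (h : EuclideanSpace ℝ (Fin n) → ℂ) (w : Fin n → ℂ) (l : ℂ)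
    (φ : EuclideanSpace ℝ (Fin n) → ℂ) (x : EuclideanSpace ℝ (Fin n))
    (hh : ContDiff ℝ 1 h)
    (hφdef : ∀ y, φ y = (∑ i, w i * (y i : ℂ)) + h y)
    (hs0 : ∀ y, s 0 y = y)
    (hsderiv : ∀ (t : ℝ) y, HasDerivAt (fun τ => s τ y) (f (s t y)) t)
    (hpde : ∀ y, fderiv ℝ h y (f y) = l * h y - ∑ i, w i * ((f_n y) i : ℂ))
    (hdecay : Filter.Tendsto (fun t : ℝ => Complex.exp (-(l * t)) * h (s t x))
      Filter.atTop (nhds 0))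
    (hint : MeasureTheory.IntegrableOn
      (fun t : ℝ => Complex.exp (-(l * t)) * ∑ i, w i * ((f_n (s t x)) i : ℂ))
      (Set.Ioi (0:ℝ))) :
    h x = (∫ t in Set.Ioi (0:ℝ),
        Complex.exp (-(l * t)) * ∑ i, w i * ((f_n (s t x)) i : ℂ)) ∧
    φ x = (∑ i, w i * (x i : ℂ)) +
      ∫ t in Set.Ioi (0:ℝ),
        Complex.exp (-(l * t)) * ∑ i, w i * ((f_n (s t x)) i : ℂ) := by
  have halong : ∀ t : ℝ, HasDerivAt (fun τ => h (s τ x))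
      (l * h (s t x) - ∑ i, w i * ((f_n (s t x)) i : ℂ)) t := fun t => by
    rw [← hpde]
    exact ((hh.differentiable one_ne_zero) (s t x)).hasFDerivAt.comp_hasDerivAt t (hsderiv t x)
  have hx : h x = ∫ t in Set.Ioi (0:ℝ),
      Complex.exp (-(l * t)) * ∑ i, w i * ((f_n (s t x)) i : ℂ) := by
    rw [integral_Ioi_cexp_neg_mul_eq_of_hasDerivAt (fun t _ => halong t) hdecay hint, hs0]
  exact ⟨hx, by rw [hφdef x, hx]⟩

/-- If h is a C¹ solution of ∇h·f = λh − wᵀf_n, e^{-λt}h(s_t(x)) → 0 as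
t → ∞ and the path integral converges, then h(x) = ∫₀^∞ e^{-λt} wᵀf_n(s_t(x)) dt, and
the principal eigenfunction is φ(x) = wᵀx + ∫₀^∞ e^{-λt} wᵀf_n(s_t(x)) dt. -/
theorem path_integral_eigenfunction_formula
    {n : ℕ} (f f_n : EuclideanSpace ℝ (Fin n) → EuclideanSpace ℝ (Fin n))
    (s : ℝ → EuclideanSpace ℝ (Fin n) → EuclideanSpace ℝ (Fin n))
    (h : EuclideanSpace ℝ (Fin n) → ℂ) (w : Fin n → ℂ) (l : ℂ)
    (φ : EuclideanSpace ℝ (Fin n) → ℂ) (x : EuclideanSpace ℝ (Fin n))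
    (hf : ContDiff ℝ 1 f) (hfn : Continuous f_n)
    (hh : ContDiff ℝ 1 h)
    (hφdef : ∀ y, φ y = (∑ i, w i * (y i : ℂ)) + h y)
    (hs0 : ∀ y, s 0 y = y)
    (hsderiv : ∀ (t : ℝ) y, HasDerivAt (fun τ => s τ y) (f (s t y)) t)
    (hpde : ∀ y, fderiv ℝ h y (f y) = l * h y - ∑ i, w i * ((f_n y) i : ℂ))
    (hdecay : Filter.Tendsto (fun t : ℝ => Complex.exp (-(l * t)) * h (s t x))
      Filter.atTop (nhds 0))
    (hint : MeasureTheory.IntegrableOn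
      (fun t : ℝ => Complex.exp (-(l * t)) * ∑ i, w i * ((f_n (s t x)) i : ℂ))
      (Set.Ioi (0:ℝ))) :
    h x = (∫ t in Set.Ioi (0:ℝ),
        Complex.exp (-(l * t)) * ∑ i, w i * ((f_n (s t x)) i : ℂ)) ∧
    φ x = (∑ i, w i * (x i : ℂ)) +
      ∫ t in Set.Ioi (0:ℝ),
        Complex.exp (-(l * t)) * ∑ i, w i * ((f_n (s t x)) i : ℂ) :=
  path_integral_eigenfunction_formula_general f f_n s h w l φ x hh hφdef hs0 hsderiv hpde hdecay
    hint
end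

section
/- Let Φ(x) = (φ₁(x),…,φₙ(x)) where each φᵢ is a C¹ eigenfunction with eigenvalue λᵢ of Re(λᵢ) < 0, let Λ = diag(λ₁,…,λₙ), and let P be a Hermitian positive definite matrix satisfying Λ*P + PΛ ≺ 0 (negative definite). Then V(x) = Φ(x)* P Φ(x) satisfies d/dt V(s_t(x)) = Φ(s_t(x))* (Λ*P + PΛ) Φ(s_t(x)) ≤ 0 along trajectories, i.e., V is nonincreasing along the flow. -/
/-! Along a trajectory the coordinates zᵢ(τ) = φᵢ(s_τ x) = e^{λᵢτ} φᵢ(x) solve the linear equation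
z' = Λz, so the Hermitian form z*Pz has derivative z*(Λ*P + PΛ)z, whose real part is nonpositive
because -(Λ*P + PΛ) is positive definite. -/

open scoped BigOperators ComplexConjugate Matrix ComplexOrder

theorem Matrix.conjTranspose_diagonal_mul_add_mul_diagonal_apply {ι : Type*} [Fintype ι]
    [DecidableEq ι] (l : ι → ℂ) (M : Matrix ι ι ℂ) (i j : ι) :
    ((Matrix.diagonal l)ᴴ * M + M * Matrix.diagonal l) i j = conj (l i) * M i j + M i j * l j := by
  simp [Matrix.diagonal_conjTranspose, Matrix.diagonal_mul, Matrix.mul_diagonal]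

theorem Matrix.star_dotProduct_mulVec_eq_sum {ι : Type*} [Fintype ι] (M : Matrix ι ι ℂ)
    (z : ι → ℂ) : star z ⬝ᵥ (M *ᵥ z) = ∑ i, ∑ j, conj (z i) * M i j * z j := by
  simp only [dotProduct, Matrix.mulVec, Finset.mul_sum, Pi.star_apply, RCLike.star_def, mul_assoc]

theorem Matrix.re_sum_conj_mul_mul_nonpos {ι : Type*} [Fintype ι] {M : Matrix ι ι ℂ}
    (hM : (-M).PosSemidef) (z : ι → ℂ) : (∑ i, ∑ j, conj (z i) * M i j * z j).re ≤ 0 := by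
  have h := hM.dotProduct_mulVec_nonneg z
  rw [Matrix.neg_mulVec, dotProduct_neg, Matrix.star_dotProduct_mulVec_eq_sum,
    Complex.le_def] at h
  simpa using h.1

theorem hasDerivAt_sum_conj_mul_mul {ι : Type*} [Fintype ι] (M : Matrix ι ι ℂ)
    {z : ι → ℝ → ℂ} {z' : ι → ℂ} {t : ℝ} (hz : ∀ i, HasDerivAt (z i) (z' i) t) :
    HasDerivAt (fun τ => ∑ i, ∑ j, conj (z i τ) * M i j * z j τ)
      (∑ i, ∑ j, (conj (z' i) * M i j * z j t + conj (z i t) * M i j * z' j)) t :=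
  HasDerivAt.fun_sum fun i _ => HasDerivAt.fun_sum fun j _ =>
    ((hz i).star.mul_const (M i j)).mul (hz j)

theorem hasDerivAt_cexp_mul_ofReal_mul (c a : ℂ) (t : ℝ) :
    HasDerivAt (fun τ : ℝ => Complex.exp (c * τ) * a) (c * (Complex.exp (c * t) * a)) t := by
  have h := (((hasDerivAt_id t).ofReal_comp).const_mul c).cexp.mul_const a
  simpa [mul_comm, mul_left_comm, mul_assoc] using h

theorem hasDerivAt_sum_conj_mul_mul_of_diagonal {ι : Type*} [Fintype ι] [DecidableEq ι]
    (M : Matrix ι ι ℂ) (l : ι → ℂ) {z : ι → ℝ → ℂ} {t : ℝ}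
    (hz : ∀ i, HasDerivAt (z i) (l i * z i t) t) :
    HasDerivAt (fun τ => ∑ i, ∑ j, conj (z i τ) * M i j * z j τ)
      (∑ i, ∑ j,
        conj (z i t) * ((Matrix.diagonal l)ᴴ * M + M * Matrix.diagonal l) i j * z j t) t := by
  convert hasDerivAt_sum_conj_mul_mul M hz using 1
  simp only [Matrix.conjTranspose_diagonal_mul_add_mul_diagonal_apply, map_mul]
  congr! 2 with i - j -
  ring

theorem koopman_lyapunov_function_general
    {n m : ℕ} (s : ℝ → EuclideanSpace ℝ (Fin n) → EuclideanSpace ℝ (Fin n))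
    (φ : Fin m → EuclideanSpace ℝ (Fin n) → ℂ) (l : Fin m → ℂ)
    (P : Matrix (Fin m) (Fin m) ℂ)
    (heig : ∀ i y, ∀ t : ℝ, φ i (s t y) = Complex.exp (l i * t) * φ i y)
    (hQ : (-(((Matrix.diagonal l)ᴴ * P) + P * Matrix.diagonal l)).PosDef) :
    ∀ (x : EuclideanSpace ℝ (Fin n)) (t : ℝ), 0 ≤ t →
      HasDerivAt
        (fun τ : ℝ => ∑ i, ∑ j, conj (φ i (s τ x)) * P i j * φ j (s τ x))
        (∑ i, ∑ j, conj (φ i (s t x)) *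
          (((Matrix.diagonal l)ᴴ * P) + P * Matrix.diagonal l) i j * φ j (s t x)) t ∧
      (∑ i, ∑ j, conj (φ i (s t x)) *
          (((Matrix.diagonal l)ᴴ * P) + P * Matrix.diagonal l) i j * φ j (s t x)).re
        ≤ 0 := by
  intro x t _
  have hflow : ∀ i, HasDerivAt (fun τ : ℝ => φ i (s τ x)) (l i * φ i (s t x)) t := fun i => by
    simp only [heig i x]
    exact hasDerivAt_cexp_mul_ofReal_mul (l i) (φ i x) t
  exact ⟨hasDerivAt_sum_conj_mul_mul_of_diagonal P l hflow,
    Matrix.re_sum_conj_mul_mul_nonpos hQ.posSemidef _⟩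

/-- Lyapunov function from Koopman eigenfunctions. With Φ = (φ₁,…,φₙ),
φᵢ(s_t(x)) = e^{λᵢ t}φᵢ(x), Re(λᵢ)<0, Λ = diag(λᵢ), P Hermitian positive definite with
Λ*P + PΛ negative definite, V(x) = Φ(x)*PΦ(x) satisfies
d/dt V(s_t(x)) = Φ(s_t(x))*(Λ*P + PΛ)Φ(s_t(x)) ≤ 0 along trajectories. -/
theorem koopman_lyapunov_function
    {n m : ℕ} (s : ℝ → EuclideanSpace ℝ (Fin n) → EuclideanSpace ℝ (Fin n))
    (φ : Fin m → EuclideanSpace ℝ (Fin n) → ℂ) (l : Fin m → ℂ)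
    (P : Matrix (Fin m) (Fin m) ℂ)
    (hl : ∀ i, (l i).re < 0)
    (hφ : ∀ i, Continuous (φ i))
    (heig : ∀ i y, ∀ t : ℝ, φ i (s t y) = Complex.exp (l i * t) * φ i y)
    (hP : P.PosDef)
    (hQ : (-(((Matrix.diagonal l)ᴴ * P) + P * Matrix.diagonal l)).PosDef) :
    ∀ (x : EuclideanSpace ℝ (Fin n)) (t : ℝ), 0 ≤ t →
      HasDerivAt
        (fun τ : ℝ => ∑ i, ∑ j, conj (φ i (s τ x)) * P i j * φ j (s τ x))
        (∑ i, ∑ j, conj (φ i (s t x)) *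
          (((Matrix.diagonal l)ᴴ * P) + P * Matrix.diagonal l) i j * φ j (s t x)) t ∧
      (∑ i, ∑ j, conj (φ i (s t x)) *
          (((Matrix.diagonal l)ᴴ * P) + P * Matrix.diagonal l) i j * φ j (s t x)).re
        ≤ 0 :=
  koopman_lyapunov_function_general s φ l P heig hQ
end

section
/- Consider ẋ = −(x − x³) on (−1,1) with explicit flow s_t(x) = x e^{-t}/√(1 − x² + x²e^{-2t}). Then the path-integral formula recovers the analytical eigenfunction: x + ∫₀^∞ e^{t} · (x³-substituted nonlinear part) dt, i.e., x + ∫₀^∞ e^{t} (s_t(x))³ dt = x/√(1 − x²) for all x ∈ (−1,1). -/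
open MeasureTheory Set Filter Real Topology

/-!
The flow `sₜ(x)` of `ẋ = -x + x³` satisfies `ṡ = -s + s³`, so by the product rule
`d/dt (eᵗ sₜ(x)) = eᵗ sₜ(x)³`: the integrand is an exact derivative. Since `e⁰ s₀(x) = x` and
`eᵗ sₜ(x) = x / √(1 - x² + x² e^{-2t}) → x / √(1 - x²)`, the fundamental theorem of calculus on
`[0, ∞)` gives the claim; integrability follows from `|sₜ(x)| ≤ C e^{-t}`.
-/

noncomputable def cubicFlow (t x : ℝ) : ℝ :=
  x * exp (-t) / sqrt (1 - x ^ 2 + x ^ 2 * exp (-2 * t))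

section
variable {x : ℝ}

lemma cubicFlow_denom_pos (hx : x ^ 2 < 1) (t : ℝ) : 0 < 1 - x ^ 2 + x ^ 2 * exp (-2 * t) := by
  have := sub_pos.2 hx
  positivity

lemma hasDerivAt_cubicFlow (hx : x ^ 2 < 1) (t : ℝ) :
    HasDerivAt (cubicFlow · x) (-cubicFlow t x + cubicFlow t x ^ 3) t := by
  have hD := cubicFlow_denom_pos hx t
  have hD' : HasDerivAt (fun t ↦ 1 - x ^ 2 + x ^ 2 * exp (-2 * t))
      (x ^ 2 * (exp (-2 * t) * -2)) t := by
    simpa using ((((hasDerivAt_id t).const_mul (-2)).exp).const_mul (x ^ 2)).const_add (1 - x ^ 2)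
  have hnum : HasDerivAt (fun t ↦ x * exp (-t)) (x * (exp (-t) * -1)) t := by
    simpa using ((hasDerivAt_id t).neg.exp).const_mul x
  refine (hnum.div (hD'.sqrt hD.ne') (sqrt_pos.2 hD).ne').congr_deriv ?_
  have hsq : sqrt (1 - x ^ 2 + x ^ 2 * exp (-2 * t)) ^ 2 = 1 - x ^ 2 + x ^ 2 * exp (-2 * t) :=
    sq_sqrt hD.le
  have he : exp (-2 * t) = exp (-t) ^ 2 := by rw [← exp_nat_mul]; ring_nf
  unfold cubicFlow
  rw [he] at hsq ⊢
  field_simp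
  rw [hsq]
  ring

lemma hasDerivAt_exp_mul_cubicFlow (hx : x ^ 2 < 1) (t : ℝ) :
    HasDerivAt (fun t ↦ exp t * cubicFlow t x) (exp t * cubicFlow t x ^ 3) t := by
  refine ((hasDerivAt_exp t).mul (hasDerivAt_cubicFlow hx t)).congr_deriv ?_
  ring

lemma exp_mul_cubicFlow (t x : ℝ) :
    exp t * cubicFlow t x = x / sqrt (1 - x ^ 2 + x ^ 2 * exp (-2 * t)) := by
  rw [cubicFlow, mul_div_assoc', ← mul_assoc, mul_comm (exp t), mul_assoc, ← exp_add,
    add_neg_cancel, exp_zero, mul_one]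

lemma tendsto_exp_mul_cubicFlow (hx : x ^ 2 < 1) :
    Tendsto (fun t ↦ exp t * cubicFlow t x) atTop (𝓝 (x / sqrt (1 - x ^ 2))) := by
  simp only [exp_mul_cubicFlow]
  have hexp : Tendsto (fun t : ℝ ↦ exp (-2 * t)) atTop (𝓝 0) :=
    tendsto_exp_atBot.comp (tendsto_id.const_mul_atTop_of_neg (by norm_num))
  have hD := ((hexp.const_mul (x ^ 2)).const_add (1 - x ^ 2)).sqrt
  simp only [mul_zero, add_zero] at hD
  exact tendsto_const_nhds.div hD (sqrt_pos.2 (sub_pos.2 hx)).ne'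

lemma abs_cubicFlow_le (hx : x ^ 2 < 1) (t : ℝ) :
    |cubicFlow t x| ≤ |x| / sqrt (1 - x ^ 2) * exp (-t) := by
  have hD := cubicFlow_denom_pos hx t
  have h1 : 0 < sqrt (1 - x ^ 2) := sqrt_pos.2 (sub_pos.2 hx)
  rw [cubicFlow, abs_div, abs_mul, abs_of_pos (exp_pos _), abs_of_pos (sqrt_pos.2 hD),
    div_mul_eq_mul_div]
  gcongr
  nlinarith [exp_pos (-2 * t), sq_nonneg x]

lemma integrableOn_exp_mul_cubicFlow_pow_three (hx : x ^ 2 < 1) :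
    IntegrableOn (fun t ↦ exp t * cubicFlow t x ^ 3) (Ioi 0) := by
  set C := |x| / sqrt (1 - x ^ 2)
  have hflow : Continuous (cubicFlow · x) :=
    continuous_iff_continuousAt.2 fun t ↦ (hasDerivAt_cubicFlow hx t).continuousAt
  have hcont : Continuous fun t ↦ exp t * cubicFlow t x ^ 3 := continuous_exp.mul (hflow.pow 3)
  refine ((exp_neg_integrableOn_Ioi 0 (by norm_num : (0 : ℝ) < 2)).const_mul (C ^ 3)).mono'
    hcont.aestronglyMeasurable.restrict (ae_of_all _ fun t ↦ ?_)
  have hC : 0 ≤ C := by positivity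
  calc ‖exp t * cubicFlow t x ^ 3‖ = exp t * |cubicFlow t x| ^ 3 := by
        rw [norm_mul, norm_pow, norm_of_nonneg (exp_pos t).le, norm_eq_abs]
    _ ≤ exp t * (C * exp (-t)) ^ 3 := by gcongr; exact abs_cubicFlow_le hx t
    _ = C ^ 3 * exp (-2 * t) := by
        rw [mul_pow, ← exp_nat_mul, mul_left_comm, ← exp_add]; ring_nf
end

/-- For ẋ = −(x − x³) with explicit flow
s_t(x) = x e^{-t}/√(1 − x² + x² e^{-2t}), the path-integral formula recovers the
analytical eigenfunction: x + ∫₀^∞ eᵗ (s_t(x))³ dt = x/√(1 − x²) on (−1,1). -/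
theorem path_integral_recovers_analytical :
    ∀ x ∈ Set.Ioo (-1 : ℝ) 1,
      x + (∫ t in Set.Ioi (0 : ℝ),
          Real.exp t *
            (x * Real.exp (-t) / Real.sqrt (1 - x ^ 2 + x ^ 2 * Real.exp (-2 * t))) ^ 3)
        = x / Real.sqrt (1 - x ^ 2) := by
  rintro x ⟨hx₁, hx₂⟩
  have hx : x ^ 2 < 1 := by nlinarith
  have hFTC := integral_Ioi_of_hasDerivAt_of_tendsto
    (hasDerivAt_exp_mul_cubicFlow hx 0).continuousAt.continuousWithinAt
    (fun t _ ↦ hasDerivAt_exp_mul_cubicFlow hx t)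
    (integrableOn_exp_mul_cubicFlow_pow_three hx) (tendsto_exp_mul_cubicFlow hx)
  change x + ∫ t in Ioi 0, exp t * cubicFlow t x ^ 3 = _
  rw [hFTC, exp_mul_cubicFlow]
  norm_num
end
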